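/- Let K = ⟨T,A⟩ be a classically satisfiable ELHI_¬ knowledge base and J_K its two-valued universal model obtained by the chase. Then for every 4-model I = ⟨Δ^I, ·^{Ip}, ·^{In}⟩ of K there is a homomorphism h : Δ^{J_K} → Δ^I from J_K into the positive part of I, i.e., h(a^{J_K}) = a^I for every individual name a, (c,d) ∈ R^{J_K} implies (h(c),h(d)) ∈ R^I for every role name R, and c ∈ A^{J_K} implies h(c) ∈ A^{Ip} for every concept name A. -/
import Mathlib


namespace Para

/-! ### Syntax -/

inductive Role (RN : Type) : Type where
  | name : RN → Role RN
  | inv  : RN → Role RN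

inductive Concept (CN RN : Type) : Type where
  | top   : Concept CN RN
  | atom  : CN → Concept CN RN
  | neg   : Concept CN RN → Concept CN RN
  | tri   : Concept CN RN → Concept CN RN
  | inter : Concept CN RN → Concept CN RN → Concept CN RN
  | all   : Role RN → Concept CN RN → Concept CN RN

namespace Concept
variable {CN RN : Type}
def bot : Concept CN RN := neg top
def union (C D : Concept CN RN) : Concept CN RN := neg (inter (neg C) (neg D))
def ex (S : Role RN) (C : Concept CN RN) : Concept CN RN := neg (all S (neg C))
end Concept

inductive DLAxiom (CN RN : Type) : Type where
  | cinc : Concept CN RN → Concept CN RN → DLAxiom CN RN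
  | rinc : Role RN → Role RN → DLAxiom CN RN

inductive Assertion (CN RN IN : Type) : Type where
  | ca : CN → IN → Assertion CN RN IN
  | ra : RN → IN → IN → Assertion CN RN IN

inductive Frm (CN RN IN : Type) : Type where
  | ax : DLAxiom CN RN → Frm CN RN IN
  | assert : Assertion CN RN IN → Frm CN RN IN

/-! ### Four-valued interpretations -/

structure FourInterp (CN RN IN : Type) : Type 1 where
  Dom : Type
  dom_nonempty : Nonempty Dom
  cpos : CN → Set Dom
  cneg : CN → Set Dom
  rext : RN → Set (Dom × Dom)
  ind : IN → Dom

variable {CN RN IN V : Type}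

def FourInterp.rInterp (I : FourInterp CN RN IN) : Role RN → Set (I.Dom × I.Dom)
  | .name R => I.rext R
  | .inv R  => {p | (p.2, p.1) ∈ I.rext R}

/-- Positive and negative extensions of a concept, as a pair. -/
def FourInterp.ext (I : FourInterp CN RN IN) : Concept CN RN → Set I.Dom × Set I.Dom
  | .top => (Set.univ, ∅)
  | .atom A => (I.cpos A, I.cneg A)
  | .neg C => ((I.ext C).2, (I.ext C).1)
  | .tri C => ((I.ext C).1, ((I.ext C).1)ᶜ)
  | .inter C D => ((I.ext C).1 ∩ (I.ext D).1, (I.ext C).2 ∪ (I.ext D).2)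
  | .all S C => ({x | ∀ y, (x, y) ∈ I.rInterp S → y ∈ (I.ext C).1},
                 {x | ∃ y, (x, y) ∈ I.rInterp S ∧ y ∈ (I.ext C).2})

def FourInterp.pExt (I : FourInterp CN RN IN) (C : Concept CN RN) : Set I.Dom := (I.ext C).1
def FourInterp.nExt (I : FourInterp CN RN IN) (C : Concept CN RN) : Set I.Dom := (I.ext C).2

def FourInterp.satAx (I : FourInterp CN RN IN) : DLAxiom CN RN → Prop
  | .cinc C D => I.pExt C ⊆ I.pExt D
  | .rinc S S' => I.rInterp S ⊆ I.rInterp S'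

def FourInterp.satAssert (I : FourInterp CN RN IN) : Assertion CN RN IN → Prop
  | .ca A a => I.ind a ∈ I.cpos A
  | .ra R a b => (I.ind a, I.ind b) ∈ I.rext R

def FourInterp.satFrm (I : FourInterp CN RN IN) : Frm CN RN IN → Prop
  | .ax ax => I.satAx ax
  | .assert α => I.satAssert α

/-! ### Classical interpretations -/

structure ClassInterp (CN RN IN : Type) : Type 1 where
  Dom : Type
  dom_nonempty : Nonempty Dom
  cext : CN → Set Dom
  rext : RN → Set (Dom × Dom)
  ind : IN → Dom

def ClassInterp.rInterp (J : ClassInterp CN RN IN) : Role RN → Set (J.Dom × J.Dom)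
  | .name R => J.rext R
  | .inv R  => {p | (p.2, p.1) ∈ J.rext R}

def ClassInterp.ext (J : ClassInterp CN RN IN) : Concept CN RN → Set J.Dom
  | .top => Set.univ
  | .atom A => J.cext A
  | .neg C => (J.ext C)ᶜ
  | .tri C => J.ext C
  | .inter C D => J.ext C ∩ J.ext D
  | .all S C => {x | ∀ y, (x, y) ∈ J.rInterp S → y ∈ J.ext C}

def ClassInterp.satAx (J : ClassInterp CN RN IN) : DLAxiom CN RN → Prop
  | .cinc C D => J.ext C ⊆ J.ext D
  | .rinc S S' => J.rInterp S ⊆ J.rInterp S'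

def ClassInterp.satAssert (J : ClassInterp CN RN IN) : Assertion CN RN IN → Prop
  | .ca A a => J.ind a ∈ J.cext A
  | .ra R a b => (J.ind a, J.ind b) ∈ J.rext R

def ClassInterp.satFrm (J : ClassInterp CN RN IN) : Frm CN RN IN → Prop
  | .ax ax => J.satAx ax
  | .assert α => J.satAssert α

/-! ### Knowledge bases -/

structure KB (CN RN IN : Type) : Type where
  tbox : Set (DLAxiom CN RN)
  abox : Set (Assertion CN RN IN)
  tbox_finite : tbox.Finite
  abox_finite : abox.Finite

def FourInterp.satKB (I : FourInterp CN RN IN) (K : KB CN RN IN) : Prop :=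
  (∀ ax ∈ K.tbox, I.satAx ax) ∧ (∀ α ∈ K.abox, I.satAssert α)

def ClassInterp.satKB (J : ClassInterp CN RN IN) (K : KB CN RN IN) : Prop :=
  (∀ ax ∈ K.tbox, J.satAx ax) ∧ (∀ α ∈ K.abox, J.satAssert α)

def fourEntailsFrm (K : KB CN RN IN) (φ : Frm CN RN IN) : Prop :=
  ∀ I : FourInterp CN RN IN, I.satKB K → I.satFrm φ

def clEntailsFrm (K : KB CN RN IN) (φ : Frm CN RN IN) : Prop :=
  ∀ J : ClassInterp CN RN IN, J.satKB K → J.satFrm φ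


/-! ### Negation normal form -/

inductive IsNNF {CN RN : Type} : Concept CN RN → Prop where
  | top : IsNNF Concept.top
  | bot : IsNNF Concept.bot
  | atom (A : CN) : IsNNF (Concept.atom A)
  | negAtom (A : CN) : IsNNF (Concept.neg (Concept.atom A))
  | triAtom (A : CN) : IsNNF (Concept.tri (Concept.atom A))
  | triNegAtom (A : CN) : IsNNF (Concept.tri (Concept.neg (Concept.atom A)))
  | negTriAtom (A : CN) : IsNNF (Concept.neg (Concept.tri (Concept.atom A)))
  | negTriNegAtom (A : CN) : IsNNF (Concept.neg (Concept.tri (Concept.neg (Concept.atom A))))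
  | inter {C D : Concept CN RN} : IsNNF C → IsNNF D → IsNNF (Concept.inter C D)
  | union {C D : Concept CN RN} : IsNNF C → IsNNF D → IsNNF (Concept.union C D)
  | all {C : Concept CN RN} (S : Role RN) : IsNNF C → IsNNF (Concept.all S C)
  | ex {C : Concept CN RN} (S : Role RN) : IsNNF C → IsNNF (Concept.ex S C)

def AxInNNF : DLAxiom CN RN → Prop
  | .cinc C D => IsNNF C ∧ IsNNF D
  | .rinc _ _ => True

def FrmInNNF : Frm CN RN IN → Prop
  | .ax ax => AxInNNF ax
  | .assert _ => True

def KBInNNF (K : KB CN RN IN) : Prop := ∀ ax ∈ K.tbox, AxInNNF ax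

/-! ### Classical counterpart translation (for concepts in NNF) -/

def clConcept {CN RN : Type} : Concept CN RN → Concept (CN ⊕ CN) RN
  | .atom A => .atom (.inl A)
  | .neg (.atom A) => .atom (.inr A)
  | .tri (.atom A) => .atom (.inl A)
  | .tri (.neg (.atom A)) => .atom (.inr A)
  | .neg (.tri (.atom A)) => .neg (.atom (.inl A))
  | .neg (.tri (.neg (.atom A))) => .neg (.atom (.inr A))
  | .top => .top
  | .neg .top => .neg .top
  | .neg (.inter (.neg C) (.neg D)) => Concept.union (clConcept C) (clConcept D)
  | .neg (.all S (.neg C)) => Concept.ex S (clConcept C)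
  | .inter C D => .inter (clConcept C) (clConcept D)
  | .all S C => .all S (clConcept C)
  | _ => .top

def clAxiom : DLAxiom CN RN → DLAxiom (CN ⊕ CN) RN
  | .cinc C D => .cinc (clConcept C) (clConcept D)
  | .rinc S S' => .rinc S S'

def clAssertion : Assertion CN RN IN → Assertion (CN ⊕ CN) RN IN
  | .ca A a => .ca (.inl A) a
  | .ra R a b => .ra R a b

def clFrm : Frm CN RN IN → Frm (CN ⊕ CN) RN IN
  | .ax ax => .ax (clAxiom ax)
  | .assert α => .assert (clAssertion α)

def clKB (K : KB CN RN IN) : KB (CN ⊕ CN) RN IN where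
  tbox := clAxiom '' K.tbox
  abox := clAssertion '' K.abox
  tbox_finite := K.tbox_finite.image _
  abox_finite := K.abox_finite.image _

/-- The classical counterpart `I^cl` of a 4-interpretation. -/
def FourInterp.toClassical (I : FourInterp CN RN IN) : ClassInterp (CN ⊕ CN) RN IN where
  Dom := I.Dom
  dom_nonempty := I.dom_nonempty
  cext := Sum.elim I.cpos I.cneg
  rext := I.rext
  ind := I.ind

/-- The 4-counterpart of a classical interpretation over names `A⁺, A⁻`. -/
def ClassInterp.toFour (J : ClassInterp (CN ⊕ CN) RN IN) : FourInterp CN RN IN where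
  Dom := J.Dom
  dom_nonempty := J.dom_nonempty
  cpos := fun A => J.cext (.inl A)
  cneg := fun A => J.cext (.inr A)
  rext := J.rext
  ind := J.ind

/-! ### The △-prefixing translation -/

def triConcept : Concept CN RN → Concept CN RN
  | .top => .top
  | .atom A => .tri (.atom A)
  | .neg C => .neg (triConcept C)
  | .tri C => .tri (triConcept C)
  | .inter C D => .inter (triConcept C) (triConcept D)
  | .all S C => .all S (triConcept C)

def TriFree : Concept CN RN → Prop
  | .top => True
  | .atom _ => True
  | .neg C => TriFree C
  | .tri _ => False
  | .inter C D => TriFree C ∧ TriFree D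
  | .all _ C => TriFree C

def AxTriFree : DLAxiom CN RN → Prop
  | .cinc C D => TriFree C ∧ TriFree D
  | .rinc _ _ => True

def FrmTriFree : Frm CN RN IN → Prop
  | .ax ax => AxTriFree ax
  | .assert _ => True

def KBTriFree (K : KB CN RN IN) : Prop := ∀ ax ∈ K.tbox, AxTriFree ax

def triAxiom : DLAxiom CN RN → DLAxiom CN RN
  | .cinc C D => .cinc (triConcept C) (triConcept D)
  | .rinc S S' => .rinc S S'

def triFrm : Frm CN RN IN → Frm CN RN IN
  | .ax ax => .ax (triAxiom ax)
  | .assert α => .assert α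

def triKB (K : KB CN RN IN) : KB CN RN IN where
  tbox := triAxiom '' K.tbox
  abox := K.abox
  tbox_finite := K.tbox_finite.image _
  abox_finite := K.abox_finite

/-! ### Removing △ -/

def flatConcept : Concept CN RN → Concept CN RN
  | .top => .top
  | .atom A => .atom A
  | .neg C => .neg (flatConcept C)
  | .tri C => flatConcept C
  | .inter C D => .inter (flatConcept C) (flatConcept D)
  | .all S C => .all S (flatConcept C)

def flatAxiom : DLAxiom CN RN → DLAxiom CN RN
  | .cinc C D => .cinc (flatConcept C) (flatConcept D)
  | .rinc S S' => .rinc S S'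

def flatKB (K : KB CN RN IN) : KB CN RN IN where
  tbox := flatAxiom '' K.tbox
  abox := K.abox
  tbox_finite := K.tbox_finite.image _
  abox_finite := K.abox_finite

/-! ### ELHI_¬ knowledge bases -/

def AtomTop (C : Concept CN RN) : Prop := C = Concept.top ∨ ∃ A, C = Concept.atom A

def AtomTopBot (C : Concept CN RN) : Prop :=
  C = Concept.top ∨ C = Concept.bot ∨ ∃ A, C = Concept.atom A

def IsELHInegAxiom : DLAxiom CN RN → Prop
  | .rinc _ _ => True
  | .cinc L M =>
      (AtomTop L ∧ ∃ S B, AtomTop B ∧ M = Concept.ex S B) ∨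
      ((∃ S A, AtomTop A ∧ L = Concept.ex S A) ∧ AtomTopBot M) ∨
      ((∃ A B, AtomTop A ∧ AtomTop B ∧ L = Concept.inter A B) ∧ AtomTopBot M) ∨
      (AtomTop L ∧ ∃ B, AtomTop B ∧ M = Concept.neg B)

def IsELHInegKB (K : KB CN RN IN) : Prop := ∀ ax ∈ K.tbox, IsELHInegAxiom ax

/-- `K⁺`: drop all concept inclusions of the weak-disjointness form `A ⊑ ¬B`
(`B` a concept name; note that in `ELHI_¬` the derived constructors `∃S.B` and
`⊥` are not of this form). -/
def KPlus (K : KB CN RN IN) : KB CN RN IN where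
  tbox := {ax ∈ K.tbox |
    ∀ (L : Concept CN RN) (B : CN), ax ≠ DLAxiom.cinc L (Concept.neg (Concept.atom B))}
  abox := K.abox
  tbox_finite := K.tbox_finite.subset (Set.sep_subset _ _)
  abox_finite := K.abox_finite

/-! ### Conjunctive queries -/

inductive Term (V IN : Type) : Type where
  | var : V → Term V IN
  | ind : IN → Term V IN

structure CQ (CN RN IN V : Type) : Type where
  roleAtoms : Set (RN × Term V IN × Term V IN)
  concAtoms : Set (CN × Term V IN)
  roleAtoms_finite : roleAtoms.Finite
  concAtoms_finite : concAtoms.Finite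

def FourInterp.cqMatch (I : FourInterp CN RN IN) (q : CQ CN RN IN V)
    (π : Term V IN → I.Dom) : Prop :=
  (∀ c : IN, π (Term.ind c) = I.ind c) ∧
  (∀ p ∈ q.roleAtoms, (π p.2.1, π p.2.2) ∈ I.rext p.1) ∧
  (∀ p ∈ q.concAtoms, π p.2 ∈ I.cpos p.1)

def ClassInterp.cqMatch (J : ClassInterp CN RN IN) (q : CQ CN RN IN V)
    (π : Term V IN → J.Dom) : Prop :=
  (∀ c : IN, π (Term.ind c) = J.ind c) ∧
  (∀ p ∈ q.roleAtoms, (π p.2.1, π p.2.2) ∈ J.rext p.1) ∧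
  (∀ p ∈ q.concAtoms, π p.2 ∈ J.cext p.1)

def fourEntailsCQ (K : KB CN RN IN) (q : CQ CN RN IN V) : Prop :=
  ∀ I : FourInterp CN RN IN, I.satKB K → ∃ π, I.cqMatch q π

def clEntailsCQ (K : KB CN RN IN) (q : CQ CN RN IN V) : Prop :=
  ∀ J : ClassInterp CN RN IN, J.satKB K → ∃ π, J.cqMatch q π

/-! ### Conjunctive queries with values -/

inductive TVal : Type where
  | T | B | N | F

structure CQV (CN RN IN V : Type) : Type where
  roleAtoms : Set (RN × Term V IN × Term V IN)
  concAtoms : Set (CN × Term V IN)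
  valAtoms : Set (TVal × CN × Term V IN)
  roleAtoms_finite : roleAtoms.Finite
  concAtoms_finite : concAtoms.Finite
  valAtoms_finite : valAtoms.Finite

namespace CQV

def atV (q : CQV CN RN IN V) (X : TVal) : Set (CN × Term V IN) :=
  {p | (X, p.1, p.2) ∈ q.valAtoms}

theorem atV_finite (q : CQV CN RN IN V) (X : TVal) : (q.atV X).Finite := by
  have h : q.atV X ⊆ (fun w : TVal × CN × Term V IN => (w.2.1, w.2.2)) '' q.valAtoms := by
    rintro ⟨A, t⟩ h
    exact ⟨(X, A, t), h, rfl⟩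
  exact (q.valAtoms_finite.image _).subset h

def atPlus (q : CQV CN RN IN V) : Set (CN × Term V IN) :=
  q.concAtoms ∪ q.atV TVal.T ∪ q.atV TVal.B

def atBF (q : CQV CN RN IN V) : Set (CN × Term V IN) := q.atV TVal.B ∪ q.atV TVal.F
def atTN (q : CQV CN RN IN V) : Set (CN × Term V IN) := q.atV TVal.T ∪ q.atV TVal.N
def atFN (q : CQV CN RN IN V) : Set (CN × Term V IN) := q.atV TVal.F ∪ q.atV TVal.N

theorem atPlus_finite (q : CQV CN RN IN V) : q.atPlus.Finite :=
  (q.concAtoms_finite.union (q.atV_finite TVal.T)).union (q.atV_finite TVal.B)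

theorem atBF_finite (q : CQV CN RN IN V) : q.atBF.Finite :=
  (q.atV_finite TVal.B).union (q.atV_finite TVal.F)

end CQV

/-- Item 1 of the definition of answers: the match required in every 4-model. -/
def FourInterp.cqvMatch1 (I : FourInterp CN RN IN) (q : CQV CN RN IN V)
    (π : Term V IN → I.Dom) : Prop :=
  (∀ c : IN, π (Term.ind c) = I.ind c) ∧
  (∀ p ∈ q.roleAtoms, (π p.2.1, π p.2.2) ∈ I.rext p.1) ∧
  (∀ p ∈ q.atPlus, π p.2 ∈ I.cpos p.1) ∧
  (∀ p ∈ q.atBF, π p.2 ∈ I.cneg p.1)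

/-- Item 2: the extra conditions required of a match in some 4-model. -/
def FourInterp.cqvMatch2 (I : FourInterp CN RN IN) (q : CQV CN RN IN V)
    (π : Term V IN → I.Dom) : Prop :=
  (∀ p ∈ q.atTN, π p.2 ∉ I.cneg p.1) ∧
  (∀ p ∈ q.atFN, π p.2 ∉ I.cpos p.1)

def fourEntailsCQV (K : KB CN RN IN) (q : CQV CN RN IN V) : Prop :=
  (∀ I : FourInterp CN RN IN, I.satKB K → ∃ π, I.cqvMatch1 q π) ∧
  (∃ I : FourInterp CN RN IN, I.satKB K ∧ ∃ π, I.cqvMatch1 q π ∧ I.cqvMatch2 q π)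


/-! ### The flattened query `q^♭` (T ↦ positive atom, F ↦ negated atom) -/

def ClassInterp.flatMatch (J : ClassInterp CN RN IN) (q : CQV CN RN IN V)
    (π : Term V IN → J.Dom) : Prop :=
  (∀ c : IN, π (Term.ind c) = J.ind c) ∧
  (∀ p ∈ q.roleAtoms, (π p.2.1, π p.2.2) ∈ J.rext p.1) ∧
  (∀ p ∈ q.concAtoms ∪ q.atV TVal.T, π p.2 ∈ J.cext p.1) ∧
  (∀ p ∈ q.atV TVal.F, π p.2 ∉ J.cext p.1)

def clEntailsFlat (K : KB CN RN IN) (q : CQV CN RN IN V) : Prop :=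
  ∀ J : ClassInterp CN RN IN, J.satKB K → ∃ π, J.flatMatch q π

/-! ### Reduction to classical query answering (Theorem queryreduction ingredients) -/

/-- `c_t`: the fresh individual name associated to a term. -/
def Term.toInd : Term V IN → IN ⊕ V
  | .ind c => Sum.inl c
  | .var x => Sum.inr x

/-- `q⁺`, a conjunctive query over the names `A⁺ = inl A`, `A⁻ = inr A`. -/
def qPlus (q : CQV CN RN IN V) : CQ (CN ⊕ CN) RN IN V where
  roleAtoms := q.roleAtoms
  concAtoms := (fun p : CN × Term V IN => ((Sum.inl p.1 : CN ⊕ CN), p.2)) '' q.atPlus ∪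
               (fun p : CN × Term V IN => ((Sum.inr p.1 : CN ⊕ CN), p.2)) '' q.atBF
  roleAtoms_finite := q.roleAtoms_finite
  concAtoms_finite := (q.atPlus_finite.image _).union (q.atBF_finite.image _)

/-- The ABox `A_q` freezing the query `q⁺`, over individual names `IN ⊕ V`. -/
def aboxQ (q : CQV CN RN IN V) : Set (Assertion (CN ⊕ CN) RN (IN ⊕ V)) :=
  (fun p : RN × Term V IN × Term V IN =>
      Assertion.ra p.1 p.2.1.toInd p.2.2.toInd) '' (qPlus q).roleAtoms ∪
  (fun p : (CN ⊕ CN) × Term V IN =>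
      Assertion.ca p.1 p.2.toInd) '' (qPlus q).concAtoms

theorem aboxQ_finite (q : CQV CN RN IN V) : (aboxQ q).Finite :=
  ((qPlus q).roleAtoms_finite.image _).union ((qPlus q).concAtoms_finite.image _)

/-- The ground atoms of the disjunction `q_ctr`. -/
def ctrAtoms (q : CQV CN RN IN V) : Set ((CN ⊕ CN) × (IN ⊕ V)) :=
  (fun p : CN × Term V IN => ((Sum.inr p.1 : CN ⊕ CN), p.2.toInd)) '' q.atTN ∪
  (fun p : CN × Term V IN => ((Sum.inl p.1 : CN ⊕ CN), p.2.toInd)) '' q.atFN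

/-- Classical entailment of a disjunction of ground concept atoms. -/
def clEntailsDisj {CN' IN' : Type} (K : KB CN' RN IN') (G : Set (CN' × IN')) : Prop :=
  ∀ J : ClassInterp CN' RN IN', J.satKB K → ∃ g ∈ G, J.ind g.2 ∈ J.cext g.1

/-- Re-index the individual names of an assertion along `Sum.inl`. -/
def Assertion.extendInd : Assertion CN RN IN → Assertion CN RN (IN ⊕ V)
  | .ca A a => .ca A (Sum.inl a)
  | .ra R a b => .ra R (Sum.inl a) (Sum.inl b)

/-- Re-index a KB to the enlarged set of individual names `IN ⊕ V`,
and add a further finite ABox. -/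
def KB.extendWith (K : KB CN RN IN) (A2 : Set (Assertion CN RN (IN ⊕ V)))
    (h : A2.Finite) : KB CN RN (IN ⊕ V) where
  tbox := K.tbox
  abox := (Assertion.extendInd '' K.abox) ∪ A2
  tbox_finite := K.tbox_finite
  abox_finite := (K.abox_finite.image _).union h

/-! ### Repair-based semantics -/

def clConsistentS (T : Set (DLAxiom CN RN)) (A : Set (Assertion CN RN IN)) : Prop :=
  ∃ J : ClassInterp CN RN IN, (∀ ax ∈ T, J.satAx ax) ∧ (∀ α ∈ A, J.satAssert α)

def clEntailsAssertS (T : Set (DLAxiom CN RN)) (A : Set (Assertion CN RN IN))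
    (φ : Assertion CN RN IN) : Prop :=
  ∀ J : ClassInterp CN RN IN,
    ((∀ ax ∈ T, J.satAx ax) ∧ (∀ α ∈ A, J.satAssert α)) → J.satAssert φ

def clEntailsCQS (T : Set (DLAxiom CN RN)) (A : Set (Assertion CN RN IN))
    (q : CQ CN RN IN V) : Prop :=
  ∀ J : ClassInterp CN RN IN,
    ((∀ ax ∈ T, J.satAx ax) ∧ (∀ α ∈ A, J.satAssert α)) → ∃ π, J.cqMatch q π

/-- A repair: an inclusion-maximal subset of the ABox consistent with the TBox. -/
def IsRepair (K : KB CN RN IN) (A' : Set (Assertion CN RN IN)) : Prop :=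
  A' ⊆ K.abox ∧ clConsistentS K.tbox A' ∧
  ∀ A'' : Set (Assertion CN RN IN),
    A' ⊆ A'' → A'' ⊆ K.abox → clConsistentS K.tbox A'' → A'' = A'

/-- The closure `C*_T(A)`. -/
def Cstar (K : KB CN RN IN) : Set (Assertion CN RN IN) :=
  {φ | ∃ A', A' ⊆ K.abox ∧ clConsistentS K.tbox A' ∧ clEntailsAssertS K.tbox A' φ}

/-- Closed repairs. -/
def IsClosedRepair (K : KB CN RN IN) (Rp : Set (Assertion CN RN IN)) : Prop :=
  Rp ⊆ Cstar K ∧ clConsistentS K.tbox Rp ∧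
  ∀ Rp' : Set (Assertion CN RN IN), Rp' ⊆ Cstar K → clConsistentS K.tbox Rp' →
    ¬(Rp ∩ K.abox ⊂ Rp' ∩ K.abox) ∧ ¬(Rp ∩ K.abox = Rp' ∩ K.abox ∧ Rp ⊂ Rp')

def braveEntailsAssert (K : KB CN RN IN) (φ : Assertion CN RN IN) : Prop :=
  ∃ A', IsRepair K A' ∧ clEntailsAssertS K.tbox A' φ

def iarEntailsAssert (K : KB CN RN IN) (φ : Assertion CN RN IN) : Prop :=
  clEntailsAssertS K.tbox (⋂₀ {A' | IsRepair K A'}) φ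

def carEntailsAssert (K : KB CN RN IN) (φ : Assertion CN RN IN) : Prop :=
  ∀ Rp, IsClosedRepair K Rp → clEntailsAssertS K.tbox Rp φ

/-- `K ⊨₄ T(A(a))`: `A(a)` is exactly-true entailed. -/
def fourEntailsT (K : KB CN RN IN) (A : CN) (a : IN) : Prop :=
  (∀ I : FourInterp CN RN IN, I.satKB K → I.ind a ∈ I.cpos A) ∧
  (∃ I : FourInterp CN RN IN, I.satKB K ∧ I.ind a ∈ I.cpos A ∧ I.ind a ∉ I.cneg A)

/-! ### The chase for ELHI_¬ -/

/-- Chase elements: individual names plus fresh successors created by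
existential axioms. -/
inductive CE (CN RN IN : Type) : Type where
  | base : IN → CE CN RN IN
  | step : CE CN RN IN → DLAxiom CN RN → CE CN RN IN

mutual
/-- `ChaseC K A d`: the chase of `K` puts element `d` in concept name `A`. -/
inductive ChaseC : KB CN RN IN → CN → CE CN RN IN → Prop where
  | abox {K : KB CN RN IN} {A a} :
      Assertion.ca A a ∈ K.abox → ChaseC K A (.base a)
  | inter {K : KB CN RN IN} {L₁ L₂ : Concept CN RN} {B d} :
      DLAxiom.cinc (Concept.inter L₁ L₂) (Concept.atom B) ∈ K.tbox →
      (∀ A, L₁ = Concept.atom A → ChaseC K A d) →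
      (∀ A, L₂ = Concept.atom A → ChaseC K A d) →
      ChaseC K B d
  | exlName {K : KB CN RN IN} {R : RN} {L : Concept CN RN} {B d e} :
      DLAxiom.cinc (Concept.ex (Role.name R) L) (Concept.atom B) ∈ K.tbox →
      ChaseR K R d e → (∀ A, L = Concept.atom A → ChaseC K A e) →
      ChaseC K B d
  | exlInv {K : KB CN RN IN} {R : RN} {L : Concept CN RN} {B d e} :
      DLAxiom.cinc (Concept.ex (Role.inv R) L) (Concept.atom B) ∈ K.tbox →
      ChaseR K R e d → (∀ A, L = Concept.atom A → ChaseC K A e) →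
      ChaseC K B d
  | exrFill {K : KB CN RN IN} {L : Concept CN RN} {S : Role RN} {B d} :
      DLAxiom.cinc L (Concept.ex S (Concept.atom B)) ∈ K.tbox →
      (∀ A, L = Concept.atom A → ChaseC K A d) →
      ChaseC K B (.step d (DLAxiom.cinc L (Concept.ex S (Concept.atom B))))

/-- `ChaseR K R d e`: the chase of `K` puts the pair `(d,e)` in role name `R`. -/
inductive ChaseR : KB CN RN IN → RN → CE CN RN IN → CE CN RN IN → Prop where
  | abox {K : KB CN RN IN} {R a b} :
      Assertion.ra R a b ∈ K.abox → ChaseR K R (.base a) (.base b)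
  | rincNN {K : KB CN RN IN} {R₁ R₂ d e} :
      DLAxiom.rinc (Role.name R₁) (Role.name R₂) ∈ K.tbox →
      ChaseR K R₁ d e → ChaseR K R₂ d e
  | rincNI {K : KB CN RN IN} {R₁ R₂ d e} :
      DLAxiom.rinc (Role.name R₁) (Role.inv R₂) ∈ K.tbox →
      ChaseR K R₁ d e → ChaseR K R₂ e d
  | rincIN {K : KB CN RN IN} {R₁ R₂ d e} :
      DLAxiom.rinc (Role.inv R₁) (Role.name R₂) ∈ K.tbox →
      ChaseR K R₁ e d → ChaseR K R₂ d e
  | rincII {K : KB CN RN IN} {R₁ R₂ d e} :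
      DLAxiom.rinc (Role.inv R₁) (Role.inv R₂) ∈ K.tbox →
      ChaseR K R₁ e d → ChaseR K R₂ e d
  | exrEdgeName {K : KB CN RN IN} {L Bc : Concept CN RN} {R : RN} {d} :
      DLAxiom.cinc L (Concept.ex (Role.name R) Bc) ∈ K.tbox →
      (∀ A, L = Concept.atom A → ChaseC K A d) →
      ChaseR K R d (.step d (DLAxiom.cinc L (Concept.ex (Role.name R) Bc)))
  | exrEdgeInv {K : KB CN RN IN} {L Bc : Concept CN RN} {R : RN} {d} :
      DLAxiom.cinc L (Concept.ex (Role.inv R) Bc) ∈ K.tbox →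
      (∀ A, L = Concept.atom A → ChaseC K A d) →
      ChaseR K R (.step d (DLAxiom.cinc L (Concept.ex (Role.inv R) Bc))) d
end


section ChaseHom

variable {CN RN IN : Type}

/-- Witness-choosing function for existential successors. -/
noncomputable def wit (I : FourInterp CN RN IN) (x : I.Dom) (ax : DLAxiom CN RN) : I.Dom :=
  @dite _ (∃ y, ∃ (S : Role RN) (Bc L : Concept CN RN),
      ax = DLAxiom.cinc L (Concept.ex S Bc) ∧ (x, y) ∈ I.rInterp S ∧ y ∈ I.pExt Bc)
    (Classical.propDecidable _) (fun hc => hc.choose)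
    (fun _ => Classical.choice I.dom_nonempty)

/-- The homomorphism from chase elements into a 4-interpretation. -/
noncomputable def hmap (I : FourInterp CN RN IN) : CE CN RN IN → I.Dom
  | .base a => I.ind a
  | .step d ax => wit I (hmap I d) ax

lemma wit_spec (I : FourInterp CN RN IN) (x : I.Dom) {S : Role RN}
    {Bc L : Concept CN RN} (hy : ∃ y, (x, y) ∈ I.rInterp S ∧ y ∈ I.pExt Bc) :
    (x, wit I x (DLAxiom.cinc L (Concept.ex S Bc))) ∈ I.rInterp S ∧
      wit I x (DLAxiom.cinc L (Concept.ex S Bc)) ∈ I.pExt Bc := by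
  obtain ⟨y, h1, h2⟩ := hy
  have hc : ∃ y, ∃ (S' : Role RN) (Bc' L' : Concept CN RN),
      DLAxiom.cinc L (Concept.ex S Bc) = DLAxiom.cinc L' (Concept.ex S' Bc') ∧
      (x, y) ∈ I.rInterp S' ∧ y ∈ I.pExt Bc' := ⟨y, S, Bc, L, rfl, h1, h2⟩
  rw [wit, dif_pos hc]
  obtain ⟨S', Bc', L', heq, h1', h2'⟩ := hc.choose_spec
  simp only [Concept.ex, DLAxiom.cinc.injEq, Concept.neg.injEq, Concept.all.injEq] at heq
  obtain ⟨-, hS, hBc⟩ := heq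
  subst hS; subst hBc
  exact ⟨h1', h2'⟩

lemma pExt_ex (I : FourInterp CN RN IN) (S : Role RN) (C : Concept CN RN) :
    I.pExt (Concept.ex S C) = {x | ∃ y, (x, y) ∈ I.rInterp S ∧ y ∈ I.pExt C} := rfl

lemma mem_pExt_of_atomTop (I : FourInterp CN RN IN) {L : Concept CN RN}
    (hL : AtomTop L) {x : I.Dom}
    (hA : ∀ A, L = Concept.atom A → x ∈ I.cpos A) : x ∈ I.pExt L := by
  rcases hL with rfl | ⟨A, rfl⟩
  · exact Set.mem_univ x
  · exact hA A rfl

lemma atomTop_of_exr {L Bc : Concept CN RN} {S : Role RN}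
    (h : IsELHInegAxiom (DLAxiom.cinc L (Concept.ex S Bc))) : AtomTop L := by
  rcases h with ⟨hL, -⟩ | ⟨-, hM⟩ | ⟨-, hM⟩ | ⟨hL, -⟩
  · exact hL
  · rcases hM with hM | hM | ⟨A, hM⟩ <;> simp [Concept.ex, Concept.bot] at hM
  · rcases hM with hM | hM | ⟨A, hM⟩ <;> simp [Concept.ex, Concept.bot] at hM
  · exact hL

lemma atomTop_of_exl {L : Concept CN RN} {B : CN} {S : Role RN}
    (h : IsELHInegAxiom (DLAxiom.cinc (Concept.ex S L) (Concept.atom B))) :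
    AtomTop L := by
  rcases h with ⟨-, S', B', hB', hM⟩ | ⟨⟨S', A, hA, hL⟩, -⟩ | ⟨⟨A', B', hA', hB', hL⟩, -⟩
    | ⟨-, B', hB', hM⟩
  · simp [Concept.ex] at hM
  · simp only [Concept.ex, Concept.neg.injEq, Concept.all.injEq] at hL
    obtain ⟨hS, hA2⟩ := hL
    exact hA2 ▸ hA
  · simp [Concept.ex] at hL
  · simp at hM

lemma atomTop_of_inter {L₁ L₂ : Concept CN RN} {B : CN}
    (h : IsELHInegAxiom (DLAxiom.cinc (Concept.inter L₁ L₂) (Concept.atom B))) :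
    AtomTop L₁ ∧ AtomTop L₂ := by
  rcases h with ⟨-, S', B', hB', hM⟩ | ⟨⟨S', A, hA, hL⟩, -⟩ | ⟨⟨A', B', hA', hB', hL⟩, -⟩
    | ⟨-, B', hB', hM⟩
  · simp [Concept.ex] at hM
  · simp [Concept.ex] at hL
  · obtain ⟨h1, h2⟩ := Concept.inter.inj hL
    exact ⟨h1 ▸ hA', h2 ▸ hB'⟩
  · simp at hM

lemma chase_both (K : KB CN RN IN) (hK : IsELHInegKB K)
    (I : FourInterp CN RN IN) (hI : I.satKB K) :
    (∀ (A : CN) (c : CE CN RN IN), ChaseC K A c → hmap I c ∈ I.cpos A) ∧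
    (∀ (R : RN) (c d : CE CN RN IN), ChaseR K R c d → (hmap I c, hmap I d) ∈ I.rext R) := by
  let m1 : (A : CN) → (c : CE CN RN IN) → ChaseC K A c → Prop :=
    fun A c _ => hmap I c ∈ I.cpos A
  let m2 : (R : RN) → (c d : CE CN RN IN) → ChaseR K R c d → Prop :=
    fun R c d _ => (hmap I c, hmap I d) ∈ I.rext R
  -- minor premises
  have p1 : ∀ {A : CN} {a : IN} (h : Assertion.ca A a ∈ K.abox),
      m1 A (CE.base a) (.abox h) := fun {A a} h => hI.2 _ h
  have p2 : ∀ {L₁ L₂ : Concept CN RN} {B : CN} {d : CE CN RN IN}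
      (h1 : DLAxiom.cinc (L₁.inter L₂) (Concept.atom B) ∈ K.tbox)
      (h2 : ∀ (A : CN), L₁ = Concept.atom A → ChaseC K A d)
      (h3 : ∀ (A : CN), L₂ = Concept.atom A → ChaseC K A d),
      (∀ (A : CN) (e : L₁ = Concept.atom A), m1 A d (h2 A e)) →
      (∀ (A : CN) (e : L₂ = Concept.atom A), m1 A d (h3 A e)) →
      m1 B d (.inter h1 h2 h3) := by
    intro L₁ L₂ B d h1 h2 h3 ih1 ih2
    obtain ⟨ha1, ha2⟩ := atomTop_of_inter (hK _ h1)
    exact hI.1 _ h1 ⟨mem_pExt_of_atomTop I ha1 ih1, mem_pExt_of_atomTop I ha2 ih2⟩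
  have p3 : ∀ {R : RN} {L : Concept CN RN} {B : CN} {d e : CE CN RN IN}
      (h1 : DLAxiom.cinc (Concept.ex (Role.name R) L) (Concept.atom B) ∈ K.tbox)
      (h2 : ChaseR K R d e)
      (h3 : ∀ (A : CN), L = Concept.atom A → ChaseC K A e),
      m2 R d e h2 →
      (∀ (A : CN) (x : L = Concept.atom A), m1 A e (h3 A x)) →
      m1 B d (.exlName h1 h2 h3) := by
    intro R L B d e h1 h2 h3 ih ihc
    exact hI.1 _ h1 ⟨hmap I e, ih, mem_pExt_of_atomTop I (atomTop_of_exl (hK _ h1)) ihc⟩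
  have p4 : ∀ {R : RN} {L : Concept CN RN} {B : CN} {d e : CE CN RN IN}
      (h1 : DLAxiom.cinc (Concept.ex (Role.inv R) L) (Concept.atom B) ∈ K.tbox)
      (h2 : ChaseR K R e d)
      (h3 : ∀ (A : CN), L = Concept.atom A → ChaseC K A e),
      m2 R e d h2 →
      (∀ (A : CN) (x : L = Concept.atom A), m1 A e (h3 A x)) →
      m1 B d (.exlInv h1 h2 h3) := by
    intro R L B d e h1 h2 h3 ih ihc
    exact hI.1 _ h1 ⟨hmap I e, ih, mem_pExt_of_atomTop I (atomTop_of_exl (hK _ h1)) ihc⟩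
  have p5 : ∀ {L : Concept CN RN} {S : Role RN} {B : CN} {d : CE CN RN IN}
      (h1 : DLAxiom.cinc L (Concept.ex S (Concept.atom B)) ∈ K.tbox)
      (h2 : ∀ (A : CN), L = Concept.atom A → ChaseC K A d),
      (∀ (A : CN) (x : L = Concept.atom A), m1 A d (h2 A x)) →
      m1 B (d.step (DLAxiom.cinc L (Concept.ex S (Concept.atom B)))) (.exrFill h1 h2) := by
    intro L S B d h1 h2 ih
    have hx : hmap I d ∈ I.pExt L :=
      mem_pExt_of_atomTop I (atomTop_of_exr (hK _ h1)) ih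
    have hy := hI.1 _ h1 hx
    exact (wit_spec I (hmap I d) hy).2
  have p6 : ∀ {R : RN} {a b : IN} (h : Assertion.ra R a b ∈ K.abox),
      m2 R (CE.base a) (CE.base b) (.abox h) := fun {R a b} h => hI.2 _ h
  have p7 : ∀ {R₁ R₂ : RN} {d e : CE CN RN IN}
      (h1 : DLAxiom.rinc (Role.name R₁) (Role.name R₂) ∈ K.tbox)
      (h2 : ChaseR K R₁ d e), m2 R₁ d e h2 → m2 R₂ d e (.rincNN h1 h2) := by
    intro R₁ R₂ d e h1 h2 ih
    exact hI.1 _ h1 ih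
  have p8 : ∀ {R₁ R₂ : RN} {d e : CE CN RN IN}
      (h1 : DLAxiom.rinc (Role.name R₁) (Role.inv R₂) ∈ K.tbox)
      (h2 : ChaseR K R₁ d e), m2 R₁ d e h2 → m2 R₂ e d (.rincNI h1 h2) := by
    intro R₁ R₂ d e h1 h2 ih
    have h' : (hmap I d, hmap I e) ∈ I.rInterp (Role.inv R₂) := hI.1 _ h1 ih
    exact h' 
  have p9 : ∀ {R₁ R₂ : RN} {d e : CE CN RN IN}
      (h1 : DLAxiom.rinc (Role.inv R₁) (Role.name R₂) ∈ K.tbox)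
      (h2 : ChaseR K R₁ e d), m2 R₁ e d h2 → m2 R₂ d e (.rincIN h1 h2) := by
    intro R₁ R₂ d e h1 h2 ih
    have h' : (hmap I d, hmap I e) ∈ I.rInterp (Role.inv R₁) := ih
    exact hI.1 _ h1 h' 
  have p10 : ∀ {R₁ R₂ : RN} {d e : CE CN RN IN}
      (h1 : DLAxiom.rinc (Role.inv R₁) (Role.inv R₂) ∈ K.tbox)
      (h2 : ChaseR K R₁ e d), m2 R₁ e d h2 → m2 R₂ e d (.rincII h1 h2) := by
    intro R₁ R₂ d e h1 h2 ih
    have h' : (hmap I d, hmap I e) ∈ I.rInterp (Role.inv R₁) := ih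
    have h'' : (hmap I d, hmap I e) ∈ I.rInterp (Role.inv R₂) := hI.1 _ h1 h'
    exact h'' 
  have p11 : ∀ {L Bc : Concept CN RN} {R : RN} {d : CE CN RN IN}
      (h1 : DLAxiom.cinc L (Concept.ex (Role.name R) Bc) ∈ K.tbox)
      (h2 : ∀ (A : CN), L = Concept.atom A → ChaseC K A d),
      (∀ (A : CN) (x : L = Concept.atom A), m1 A d (h2 A x)) →
      m2 R d (d.step (DLAxiom.cinc L (Concept.ex (Role.name R) Bc))) (.exrEdgeName h1 h2) := by
    intro L Bc R d h1 h2 ih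
    have hx : hmap I d ∈ I.pExt L :=
      mem_pExt_of_atomTop I (atomTop_of_exr (hK _ h1)) ih
    have hy := hI.1 _ h1 hx
    exact (wit_spec I (hmap I d) hy).1
  have p12 : ∀ {L Bc : Concept CN RN} {R : RN} {d : CE CN RN IN}
      (h1 : DLAxiom.cinc L (Concept.ex (Role.inv R) Bc) ∈ K.tbox)
      (h2 : ∀ (A : CN), L = Concept.atom A → ChaseC K A d),
      (∀ (A : CN) (x : L = Concept.atom A), m1 A d (h2 A x)) →
      m2 R (d.step (DLAxiom.cinc L (Concept.ex (Role.inv R) Bc))) d (.exrEdgeInv h1 h2) := by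
    intro L Bc R d h1 h2 ih
    have hx : hmap I d ∈ I.pExt L :=
      mem_pExt_of_atomTop I (atomTop_of_exr (hK _ h1)) ih
    have hy := hI.1 _ h1 hx
    exact (wit_spec I (hmap I d) hy).1
  refine ⟨fun A c h => ?_, fun R c d h => ?_⟩
  · exact ChaseC.rec (motive_1 := m1) (motive_2 := m2)
      p1 p2 p3 p4 p5 p6 p7 p8 p9 p10 p11 p12 h
  · exact ChaseR.rec (motive_1 := m1) (motive_2 := m2)
      p1 p2 p3 p4 p5 p6 p7 p8 p9 p10 p11 p12 h

end ChaseHom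

/-- for every classically satisfiable ELHI_¬ KB `K` and every
4-model `I` of `K`, there is a homomorphism from the chase-generated universal
model `J_K` of `K` into the positive part of `I`. -/
theorem chase_homomorphism {CN RN IN : Type} (K : KB CN RN IN)
    (hK : IsELHInegKB K) (hsat : ∃ J : ClassInterp CN RN IN, J.satKB K)
    (I : FourInterp CN RN IN) (hI : I.satKB K) :
    ∃ h : CE CN RN IN → I.Dom,
      (∀ a : IN, h (CE.base a) = I.ind a) ∧
      (∀ (R : RN) (c d : CE CN RN IN), ChaseR K R c d → (h c, h d) ∈ I.rext R) ∧
      (∀ (A : CN) (c : CE CN RN IN), ChaseC K A c → h c ∈ I.cpos A) := by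
  obtain ⟨h1, h2⟩ := chase_both K hK I hI
  exact ⟨hmap I, fun a => rfl, h2, h1⟩

end Para
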